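/- The robust newsvendor game (N, Y, V(P(P_1,...,P_R))) always has an imputation; equivalently, Σ_{i∈N} v̄_i ≤ v_P(y*_wc(N), N) for all P ∈ P(P_1,...,P_R), where v̄_i is retailer i's standalone optimal expected profit. -/

import Mathlib

open MeasureTheory

/-- The Fréchet class of joint demand distributions on `ι → ℝ` consistent with the
prescribed block marginals `P r` on the blocks `{i // ρ i = r}`. -/
def frechet {ι : Type*} [Fintype ι] {R : ℕ} (ρ : ι → Fin R)
    (P : (r : Fin R) → Measure ({i : ι // ρ i = r} → ℝ)) : Set (Measure (ι → ℝ)) :=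
  {μ | IsProbabilityMeasure μ ∧
    ∀ r : Fin R, μ.map (fun d (i : {i : ι // ρ i = r}) => d i.1) = P r}

/-- Expected newsvendor profit of coalition `S` under joint distribution `μ` and order `y`. -/
noncomputable def vP {ι : Type*} [Fintype ι] (p c : ℝ) (μ : Measure (ι → ℝ))
    (y : ℝ) (S : Finset ι) : ℝ :=
  (p - c) * y - p * ∫ d, max (y - ∑ i ∈ S, d i) 0 ∂μ

/-- Deterministic newsvendor objective of the full block `N_r` under the marginal `P r`. -/
noncomputable def fblock {ι : Type*} [Fintype ι] {R : ℕ} (ρ : ι → Fin R)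
    (P : (r : Fin R) → Measure ({i : ι // ρ i = r} → ℝ))
    (p c : ℝ) (r : Fin R) (x : ℝ) : ℝ :=
  (p - c) * x - p * ∫ w, max (x - ∑ i : {i : ι // ρ i = r}, w i) 0 ∂(P r)

/-- Retailer `i`'s standalone optimal expected profit `v̄_i` (its demand distribution,
the `i`-marginal of `P (ρ i)`, is known). -/
noncomputable def vbarInd {ι : Type*} [Fintype ι] {R : ℕ} (ρ : ι → Fin R)
    (P : (r : Fin R) → Measure ({i : ι // ρ i = r} → ℝ))
    (p c : ℝ) (i : ι) : ℝ :=
  ⨆ x : {x : ℝ // 0 ≤ x},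
    (p - c) * x.1 - p * ∫ w, max (x.1 - w ⟨i, rfl⟩) 0 ∂(P (ρ i))

/-!
Pooling demands can only help a newsvendor: since `(∑ xᵢ - ∑ Dᵢ)⁺ ≤ ∑ (xᵢ - Dᵢ)⁺`, ordering
`∑ xᵢ` against the pooled demand `∑ Dᵢ` earns at least the sum of the individual profits, on any
probability space. Inside a block `N_r`, this bounds `∑_{i ∈ N_r} v̄_i` by the block's optimal
profit at `y*(N_r)`. Across blocks, every `μ` in the Fréchet class carries all block demands on
one space with the prescribed marginals, so the block profits add up to at most the grand
coalition's profit at `∑_r y*(N_r)`, whatever the dependence between the blocks.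
-/

lemma max_sum_zero_le_sum_max_zero {κ : Type*} (s : Finset κ) (a : κ → ℝ) :
    max (∑ i ∈ s, a i) 0 ≤ ∑ i ∈ s, max (a i) 0 :=
  max_le (Finset.sum_le_sum fun _ _ => le_max_left _ _)
    (Finset.sum_nonneg fun _ _ => le_max_right _ _)

lemma Finset.sum_ciSup_le_of_forall_sum_le {κ α : Type*} [DecidableEq κ] [Nonempty α]
    (s : Finset κ) (f : κ → α → ℝ) (C : ℝ)
    (h : ∀ g : κ → α, ∑ i ∈ s, f i (g i) ≤ C) :
    ∑ i ∈ s, ⨆ x, f i x ≤ C := by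
  induction s using Finset.induction_on generalizing C with
  | empty => simpa using h fun _ => Classical.arbitrary α
  | @insert a s ha ih =>
    rw [Finset.sum_insert ha, ← le_sub_iff_add_le]
    refine ciSup_le fun x : α => le_sub_comm.mp (ih (C - f a x) fun g => ?_)
    have hg := h (Function.update g a x)
    rw [Finset.sum_insert ha, Function.update_self] at hg
    have hs : ∑ i ∈ s, f i (Function.update g a x i) = ∑ i ∈ s, f i (g i) :=
      Finset.sum_congr rfl fun i hi => by rw [Function.update_of_ne (ne_of_mem_of_not_mem hi ha)]
    linarith

section Newsvendor

variable {Ω : Type*} [MeasurableSpace Ω]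

/-- `(p - c) x - p (x - D)⁺ = p min(x, D) - c x`: sales at price `p` minus the ordering cost. -/
noncomputable def newsvendorProfit (p c : ℝ) (ν : Measure Ω) (D : Ω → ℝ) (x : ℝ) : ℝ :=
  (p - c) * x - p * ∫ ω, max (x - D ω) 0 ∂ν

lemma integrable_max_const_sub_zero {ν : Measure Ω} [IsFiniteMeasure ν] {D : Ω → ℝ}
    (hD : AEMeasurable D ν) (hD0 : 0 ≤ᵐ[ν] D) (x : ℝ) :
    Integrable (fun ω => max (x - D ω) 0) ν := by
  refine Integrable.of_bound
    ((aemeasurable_const.sub hD).max aemeasurable_const).aestronglyMeasurable (max x 0) ?_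
  filter_upwards [hD0] with ω (hω : 0 ≤ D ω)
  rw [Real.norm_of_nonneg (le_max_right _ _)]
  exact max_le_max (by linarith) le_rfl

theorem sum_newsvendorProfit_le {κ : Type*} {p : ℝ} (hp : 0 ≤ p) (c : ℝ) {ν : Measure Ω}
    [IsFiniteMeasure ν] (s : Finset κ) {D : κ → Ω → ℝ} (hD : ∀ i ∈ s, AEMeasurable (D i) ν)
    (hD0 : ∀ i ∈ s, 0 ≤ᵐ[ν] D i) (x : κ → ℝ) :
    ∑ i ∈ s, newsvendorProfit p c ν (D i) (x i) ≤
      newsvendorProfit p c ν (fun ω => ∑ i ∈ s, D i ω) (∑ i ∈ s, x i) := by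
  have hint : ∀ i ∈ s, Integrable (fun ω => max (x i - D i ω) 0) ν :=
    fun i hi => integrable_max_const_sub_zero (hD i hi) (hD0 i hi) (x i)
  have hpooled_nonneg : 0 ≤ᵐ[ν] fun ω => ∑ i ∈ s, D i ω := by
    filter_upwards [(Filter.eventually_all_finset s).mpr hD0] with ω hω
    exact Finset.sum_nonneg hω
  have hpooled : Integrable (fun ω => max (∑ i ∈ s, x i - ∑ i ∈ s, D i ω) 0) ν :=
    integrable_max_const_sub_zero (Finset.aemeasurable_fun_sum s hD) hpooled_nonneg _
  have hunsold : ∫ ω, max (∑ i ∈ s, x i - ∑ i ∈ s, D i ω) 0 ∂ν ≤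
      ∑ i ∈ s, ∫ ω, max (x i - D i ω) 0 ∂ν := by
    rw [← integral_finsetSum s hint]
    refine integral_mono hpooled (integrable_finsetSum s hint) fun ω => ?_
    simpa only [← Finset.sum_sub_distrib] using max_sum_zero_le_sum_max_zero s _
  simp only [newsvendorProfit, Finset.sum_sub_distrib, ← Finset.mul_sum]
  nlinarith

lemma newsvendorProfit_map {Ω' : Type*} [MeasurableSpace Ω'] (p c : ℝ) {ν : Measure Ω}
    {f : Ω → Ω'} (hf : AEMeasurable f ν) {D : Ω' → ℝ} (hD : Measurable D) (x : ℝ) :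
    newsvendorProfit p c (ν.map f) D x = newsvendorProfit p c ν (D ∘ f) x := by
  unfold newsvendorProfit
  rw [integral_map hf (by fun_prop : Measurable fun y => max (x - D y) 0).aestronglyMeasurable]
  rfl

end Newsvendor

section RobustNewsvendorGame

variable {ι : Type*} [Fintype ι] {R : ℕ} (ρ : ι → Fin R)
  (P : (r : Fin R) → Measure ({i : ι // ρ i = r} → ℝ))

lemma vbarInd_eq_iSup_newsvendorProfit (p c : ℝ) {r : Fin R} (i : {i : ι // ρ i = r}) :
    vbarInd ρ P p c i =
      ⨆ x : {x : ℝ // 0 ≤ x}, newsvendorProfit p c (P r) (fun w => w i) x := by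
  obtain ⟨i, rfl⟩ := i
  rfl

lemma sum_vbarInd_le_fblock {r : Fin R} [IsFiniteMeasure (P r)]
    (hnonneg : ∀ᵐ w ∂(P r), ∀ i, 0 ≤ w i) {p : ℝ} (hp : 0 ≤ p) (c : ℝ) {y : ℝ}
    (hy : ∀ x : ℝ, 0 ≤ x → fblock ρ P p c r x ≤ fblock ρ P p c r y) :
    ∑ i : {i : ι // ρ i = r}, vbarInd ρ P p c i ≤ fblock ρ P p c r y := by
  classical
  simp only [vbarInd_eq_iSup_newsvendorProfit]
  refine Finset.sum_ciSup_le_of_forall_sum_le _ _ _ fun x => ?_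
  calc ∑ i, newsvendorProfit p c (P r) (fun w => w i) (x i)
      ≤ newsvendorProfit p c (P r) (fun w => ∑ i, w i) (∑ i, (x i : ℝ)) :=
        sum_newsvendorProfit_le hp c _ (fun i _ => (measurable_pi_apply i).aemeasurable)
          (fun i _ => hnonneg.mono fun w hw => hw i) _
    _ ≤ fblock ρ P p c r y := hy _ (Finset.sum_nonneg fun i _ => (x i).2)

lemma sum_fblock_le_vP (hnonneg : ∀ r, ∀ᵐ w ∂(P r), ∀ i, 0 ≤ w i) {p : ℝ} (hp : 0 ≤ p)
    (c : ℝ) {μ : Measure (ι → ℝ)} (hμ : μ ∈ frechet ρ P) (y : Fin R → ℝ) :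
    ∑ r, fblock ρ P p c r (y r) ≤ vP p c μ (∑ r, y r) Finset.univ := by
  obtain ⟨hμ, hmarg⟩ := hμ
  have hproj : ∀ r, Measurable fun (d : ι → ℝ) (i : {i : ι // ρ i = r}) => d i :=
    fun r => by fun_prop
  have hblock : ∀ r, fblock ρ P p c r (y r) =
      newsvendorProfit p c μ (fun d => ∑ i : {i : ι // ρ i = r}, d i) (y r) := fun r => by
    rw [fblock, ← hmarg r]
    exact newsvendorProfit_map p c (hproj r).aemeasurable (by fun_prop) (y r)
  have hblock_meas : ∀ r, Measurable fun d : ι → ℝ => ∑ i : {i : ι // ρ i = r}, d i :=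
    fun r => by fun_prop
  have hblock_nonneg : ∀ r, 0 ≤ᵐ[μ] fun d => ∑ i : {i : ι // ρ i = r}, d i := fun r =>
    ae_of_ae_map (p := fun w => 0 ≤ ∑ i, w i) (hproj r).aemeasurable <| by
      rw [hmarg r]
      filter_upwards [hnonneg r] with w hw using Finset.sum_nonneg fun i _ => hw i
  calc ∑ r, fblock ρ P p c r (y r)
      = ∑ r, newsvendorProfit p c μ (fun d => ∑ i : {i : ι // ρ i = r}, d i) (y r) :=
        Finset.sum_congr rfl fun r _ => hblock r
    _ ≤ newsvendorProfit p c μ (fun d => ∑ r, ∑ i : {i : ι // ρ i = r}, d i) (∑ r, y r) :=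
        sum_newsvendorProfit_le hp c _
          (fun r _ => (hblock_meas r).aemeasurable) (fun r _ => hblock_nonneg r) y
    _ = vP p c μ (∑ r, y r) Finset.univ := by
        simp only [Fintype.sum_fiberwise]
        rfl

end RobustNewsvendorGame

theorem stmt_11_general {ι : Type*} [Fintype ι] {R : ℕ} (ρ : ι → Fin R)
    (P : (r : Fin R) → Measure ({i : ι // ρ i = r} → ℝ))
    (hP : ∀ r, IsProbabilityMeasure (P r))
    (hnonneg : ∀ r, ∀ᵐ w ∂(P r), ∀ i, 0 ≤ w i)
    (p c : ℝ) (hc : 0 < c) (hcp : c < p)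
    (yq : Fin R → ℝ)
    (hyq : ∀ r : Fin R, 0 ≤ yq r ∧
      ∀ x : ℝ, 0 ≤ x → fblock ρ P p c r x ≤ fblock ρ P p c r (yq r)) :
    ∀ μ ∈ frechet ρ P,
      ∑ i : ι, vbarInd ρ P p c i ≤ vP p c μ (∑ r, yq r) Finset.univ := by
  intro μ hμ
  have hp : 0 ≤ p := hc.le.trans hcp.le
  calc ∑ i, vbarInd ρ P p c i
      = ∑ r, ∑ i : {i : ι // ρ i = r}, vbarInd ρ P p c i := (Fintype.sum_fiberwise ρ _).symm
    _ ≤ ∑ r, fblock ρ P p c r (yq r) :=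
        Finset.sum_le_sum fun r _ => sum_vbarInd_le_fblock ρ P (hnonneg r) hp c (hyq r).2
    _ ≤ vP p c μ (∑ r, yq r) Finset.univ := sum_fblock_le_vP ρ P hnonneg hp c hμ yq

/-- The robust newsvendor game always has an imputation; equivalently,
`∑_i v̄_i ≤ v_P(y*_wc(N), N)` for every `P` in the Fréchet class, where
`y*_wc(N) = ∑_r y*(N_r)` is the worst-case optimal order quantity. -/
theorem stmt_11 {ι : Type*} [Fintype ι] {R : ℕ} (ρ : ι → Fin R)
    (P : (r : Fin R) → Measure ({i : ι // ρ i = r} → ℝ))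
    (hP : ∀ r, IsProbabilityMeasure (P r))
    (hnonneg : ∀ r, ∀ᵐ w ∂(P r), ∀ i, 0 ≤ w i)
    (hbdd : ∀ r, ∃ M : ℝ, ∀ᵐ w ∂(P r), ∀ i, w i ≤ M)
    (p c : ℝ) (hc : 0 < c) (hcp : c < p)
    (yq : Fin R → ℝ)
    (hyq : ∀ r : Fin R, 0 ≤ yq r ∧
      ∀ x : ℝ, 0 ≤ x → fblock ρ P p c r x ≤ fblock ρ P p c r (yq r)) :
    ∀ μ ∈ frechet ρ P,
      ∑ i : ι, vbarInd ρ P p c i ≤ vP p c μ (∑ r, yq r) Finset.univ :=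
  stmt_11_general ρ P hP hnonneg p c hc hcp yq hyq
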